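/- Let (R, m) be a Noetherian local ring of Krull dimension n, let a_{•,0} and a_{•,1} be m-filtrations on R, let (a_{•,t})_{t∈[0,1]} be the geodesic between them, and fix 0 ≤ t < t' ≤ 1. Suppose there are real numbers e_0, e_t, e_{t'}, e_{0,t}, e_{t,t'}, e_{0,t'} such that, as the positive integer m → ∞, n!·ℓ_R(R/a_{m,s})/m^n → e_s for each s ∈ {0, t, t'}, and n!·ℓ_R(R/(a_{m,s} ∩ a_{m,s'}))/m^n → e_{s,s'} for each (s,s') ∈ {(0,t), (t,t'), (0,t')}. Then 2e_{0,t'} − e_0 − e_{t'} = (2e_{0,t} − e_0 − e_t) + (2e_{t,t'} − e_t − e_{t'}); that is, d_1(a_{•,0}, a_{•,t'}) = d_1(a_{•,0}, a_{•,t}) + d_1(a_{•,t}, a_{•,t'}), so the geodesic is distance-minimizing for d_1. -/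

import Mathlib

open IsLocalRing

variable {R : Type*} [CommRing R] [IsNoetherianRing R] [IsLocalRing R]

/-- An ideal is `m`-primary: proper with radical the maximal ideal. -/
def IsPrimaryToMax (R : Type*) [CommRing R] [IsLocalRing R] (I : Ideal R) : Prop :=
  I ≠ ⊤ ∧ I.radical = maximalIdeal R

/-- An `m`-filtration on a Noetherian local ring `(R, m)`: a family of `m`-primary ideals
indexed by `ℝ` (only the values at `λ > 0` matter, with the convention `a 0 = R`),
decreasing, left-continuous and multiplicative. -/
structure IsMFiltration (R : Type*) [CommRing R] [IsLocalRing R] (a : ℝ → Ideal R) : Prop where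
  primary : ∀ lam : ℝ, 0 < lam → IsPrimaryToMax R (a lam)
  antitone : ∀ lam mu : ℝ, 0 < mu → mu < lam → a lam ≤ a mu
  left_cont : ∀ lam : ℝ, 0 < lam → ∃ ε > (0 : ℝ), ∀ ε' : ℝ, 0 < ε' → ε' ≤ ε →
    a (lam - ε') = a lam
  mul : ∀ lam mu : ℝ, 0 < lam → 0 < mu → a lam * a mu ≤ a (lam + mu)
  zero : a 0 = ⊤

/-- The geodesic between two `m`-filtrations `a₀` and `a₁` at time `t`:
`a_{λ,t} = Σ_{μ,ν ≥ 0, (1−t)μ + tν = λ} (a₀_μ ∩ a₁_ν)` (sum of ideals, i.e. supremum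
over all such pairs `(μ, ν)` of nonnegative reals). -/
noncomputable def geodesic {R : Type*} [CommRing R] (a₀ a₁ : ℝ → Ideal R)
    (t lam : ℝ) : Ideal R :=
  ⨆ (p : ℝ × ℝ) (_ : 0 ≤ p.1 ∧ 0 ≤ p.2 ∧ (1 - t) * p.1 + t * p.2 = lam),
    (a₀ p.1 ⊓ a₁ p.2)

/-- The length `ℓ_R(R/I)` as a real number: the supremum of lengths of strictly
increasing chains of submodules of `R/I` (Krull dimension of the submodule lattice),
truncated to a natural number (it is finite for `m`-primary `I`) and cast to `ℝ`. -/
noncomputable def colengthR (R : Type*) [CommRing R] (I : Ideal R) : ℝ :=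
  ((WithBot.unbotD 0 (Order.krullDim (Submodule R (R ⧸ I)))).toNat : ℝ)

/-!
Fix `λ > 0` and put `b = a_{λ,0} ∩ a_{λ,t}`, `c = a_{λ,t} ∩ a_{λ,t'}`. Splitting the pairs `(μ, ν)`
that define the geodesic according to whether `μ ≥ λ` shows `b ∩ c = a_{λ,0} ∩ a_{λ,t'}` and
`b + c = a_{λ,t}` (the first needs the modular law for ideals). Additivity of length along
`0 → R/(b ∩ c) → R/b ⊕ R/c → R/(b + c) → 0` then gives
`ℓ(R/(a_{λ,0} ∩ a_{λ,t'})) + ℓ(R/a_{λ,t}) = ℓ(R/(a_{λ,0} ∩ a_{λ,t})) + ℓ(R/(a_{λ,t} ∩ a_{λ,t'}))`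
for every `λ > 0`, and the claimed identity is its limit after normalisation.
-/

namespace Submodule

variable {R M : Type*} [Ring R] [AddCommGroup M] [Module R M]

theorem length_quotient_antitone : Antitone fun p : Submodule R M ↦ Module.length R (M ⧸ p) :=
  fun p q h ↦ by simpa only [Module.length_quotient] using Order.coheight_anti h

theorem length_quotient_inf_add_length_quotient_sup (p q : Submodule R M) :
    Module.length R (M ⧸ p ⊓ q) + Module.length R (M ⧸ p ⊔ q) =
      Module.length R (M ⧸ p) + Module.length R (M ⧸ q) := by
  let f : M ⧸ p ⊓ q →ₗ[R] (M ⧸ p) × (M ⧸ q) := (factor inf_le_left).prod (factor inf_le_right)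
  let g : (M ⧸ p) × (M ⧸ q) →ₗ[R] M ⧸ p ⊔ q :=
    (factor le_sup_left).coprod (-factor le_sup_right)
  have hf' (x : M) : f (Quotient.mk x) = (Quotient.mk x, Quotient.mk x) := rfl
  have hg' (x x' : M) : g (Quotient.mk x, Quotient.mk x') = Quotient.mk (x - x') := by
    simp [g, sub_eq_add_neg]
  have hf : Function.Injective f := by
    refine (injective_iff_map_eq_zero f).2 fun y hy ↦ ?_
    obtain ⟨x, rfl⟩ := Quotient.mk_surjective _ y
    rw [hf', Prod.mk_eq_zero, Quotient.mk_eq_zero, Quotient.mk_eq_zero] at hy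
    exact (Quotient.mk_eq_zero _).2 ⟨hy.1, hy.2⟩
  have hg : Function.Surjective g := by
    intro y
    obtain ⟨x, rfl⟩ := Quotient.mk_surjective _ y
    exact ⟨(Quotient.mk x, 0), by rw [← Quotient.mk_zero, hg', sub_zero]⟩
  have hfg : Function.Exact f g := by
    rintro ⟨y, y'⟩
    obtain ⟨x, rfl⟩ := Quotient.mk_surjective _ y
    obtain ⟨x', rfl⟩ := Quotient.mk_surjective _ y'
    rw [hg', Quotient.mk_eq_zero, mem_sup, Set.mem_range]
    constructor
    · rintro ⟨a, ha, b, hb, hab⟩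
      refine ⟨Quotient.mk (x - a), ?_⟩
      rw [hf', Prod.mk.injEq, Quotient.eq, Quotient.eq]
      exact ⟨by simpa using ha, by rwa [sub_right_comm, ← hab, add_sub_cancel_left]⟩
    · rintro ⟨y, hy⟩
      obtain ⟨z, rfl⟩ := Quotient.mk_surjective _ y
      rw [hf', Prod.mk.injEq, Quotient.eq, Quotient.eq] at hy
      exact ⟨x - z, by simpa using neg_mem hy.1, z - x', hy.2, by abel⟩
  rw [← Module.length_eq_add_of_exact f g hf hg hfg, Module.length_prod]

end Submodule

section Colength

variable {R : Type*} [CommRing R]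

theorem colengthR_eq_toNat_length (I : Ideal R) :
    colengthR R I = (Module.length R (R ⧸ I)).toNat := by
  rw [colengthR, ← Module.coe_length, WithBot.unbotD_coe]

theorem colengthR_inf_add_colengthR_sup {b c : Ideal R}
    (h : Module.length R (R ⧸ b ⊓ c) ≠ ⊤) :
    colengthR R (b ⊓ c) + colengthR R (b ⊔ c) = colengthR R b + colengthR R c := by
  have hfin {I : Ideal R} (hI : b ⊓ c ≤ I) : Module.length R (R ⧸ I) ≠ ⊤ :=
    ne_top_of_le_ne_top h (Submodule.length_quotient_antitone hI)
  have key := congrArg ENat.toNat (Submodule.length_quotient_inf_add_length_quotient_sup b c)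
  rw [ENat.toNat_add h (hfin (inf_le_left.trans le_sup_left)),
    ENat.toNat_add (hfin inf_le_left) (hfin inf_le_right)] at key
  simp only [colengthR_eq_toNat_length]
  exact_mod_cast key

theorem IsPrimaryToMax.inf [IsLocalRing R] {I J : Ideal R} (hI : IsPrimaryToMax R I)
    (hJ : IsPrimaryToMax R J) : IsPrimaryToMax R (I ⊓ J) :=
  ⟨ne_top_of_le_ne_top hI.1 inf_le_left, by rw [Ideal.radical_inf, hI.2, hJ.2, inf_idem]⟩

theorem IsPrimaryToMax.length_quotient_ne_top [IsLocalRing R] [IsNoetherianRing R] {I : Ideal R}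
    (hI : IsPrimaryToMax R I) : Module.length R (R ⧸ I) ≠ ⊤ := by
  have : IsArtinianRing (R ⧸ I) := by
    apply IsLocalRing.quotient_artinian_of_mem_minimalPrimes_of_isLocalRing
    rw [← Ideal.radical_minimalPrimes, hI.2, Ideal.minimalPrimes_eq_subsingleton_self]
    exact Set.mem_singleton _
  rw [Module.length_eq_of_surjective (R := R ⧸ I) Ideal.Quotient.mk_surjective]
  exact Module.length_ne_top

end Colength

section Geodesic

variable {R : Type*} [CommRing R] {a a₀ a₁ : ℝ → Ideal R}

theorem IsMFiltration.antitoneOn [IsLocalRing R] (h : IsMFiltration R a) :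
    AntitoneOn a (Set.Ici 0) := by
  intro x hx y _ hxy
  rcases (Set.mem_Ici.1 hx).eq_or_lt with rfl | hx0
  · exact h.zero ▸ le_top
  · rcases hxy.eq_or_lt with rfl | hlt
    · exact le_rfl
    · exact h.antitone y x hx0 hlt

theorem le_geodesic {t lam mu nu : ℝ} (hmu : 0 ≤ mu) (hnu : 0 ≤ nu)
    (h : (1 - t) * mu + t * nu = lam) : a₀ mu ⊓ a₁ nu ≤ geodesic a₀ a₁ t lam :=
  le_iSup₂_of_le (mu, nu) ⟨hmu, hnu, h⟩ le_rfl

theorem geodesic_le {t lam : ℝ} {I : Ideal R}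
    (h : ∀ mu nu : ℝ, 0 ≤ mu → 0 ≤ nu → (1 - t) * mu + t * nu = lam → a₀ mu ⊓ a₁ nu ≤ I) :
    geodesic a₀ a₁ t lam ≤ I :=
  iSup₂_le fun p hp ↦ h p.1 p.2 hp.1 hp.2.1 hp.2.2

theorem geodesic_zero (h₁ : a₁ 0 = ⊤) {lam : ℝ} (hlam : 0 ≤ lam) :
    geodesic a₀ a₁ 0 lam = a₀ lam := by
  refine le_antisymm (geodesic_le fun mu nu _ _ h ↦ ?_) ?_
  · rw [← h]
    simp
  · simpa [h₁] using le_geodesic (a₀ := a₀) (a₁ := a₁) (t := 0) hlam le_rfl (by ring)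

variable [IsLocalRing R]

/-- The pair `(μ, ν)` is rescaled onto the line `(1 - t) μ + t ν = λ`. -/
theorem inf_le_geodesic (h₀ : IsMFiltration R a₀) (h₁ : IsMFiltration R a₁)
    {t lam mu nu : ℝ} (ht0 : 0 ≤ t) (ht1 : t ≤ 1) (hmu : 0 ≤ mu) (hnu : 0 ≤ nu)
    (hlam : 0 ≤ lam) (hle : lam ≤ (1 - t) * mu + t * nu) :
    a₀ mu ⊓ a₁ nu ≤ geodesic a₀ a₁ t lam := by
  set S := (1 - t) * mu + t * nu
  have hS0 : 0 ≤ S := add_nonneg (mul_nonneg (sub_nonneg.2 ht1) hmu) (mul_nonneg ht0 hnu)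
  rcases hS0.eq_or_lt with hS | hS
  · have hlam0 : lam = 0 := by linarith
    refine le_trans ?_ (le_geodesic (t := t) le_rfl le_rfl (by rw [hlam0]; ring))
    simp [h₀.zero, h₁.zero]
  · set s := lam / S
    have hs0 : 0 ≤ s := div_nonneg hlam hS.le
    have hs1 : s ≤ 1 := (div_le_one hS).mpr hle
    refine le_trans (inf_le_inf ?_ ?_) (le_geodesic (mul_nonneg hs0 hmu) (mul_nonneg hs0 hnu)
      (show (1 - t) * (s * mu) + t * (s * nu) = lam by
        rw [show (1 - t) * (s * mu) + t * (s * nu) = s * S by ring, div_mul_cancel₀ _ hS.ne']))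
    · exact h₀.antitoneOn (mul_nonneg hs0 hmu) hmu (mul_le_of_le_one_left hmu hs1)
    · exact h₁.antitoneOn (mul_nonneg hs0 hnu) hnu (mul_le_of_le_one_left hnu hs1)

theorem inf_geodesic_le_geodesic (h₀ : IsMFiltration R a₀) (h₁ : IsMFiltration R a₁)
    {t t' lam : ℝ} (ht : 0 ≤ t) (htt' : t < t') (ht' : t' ≤ 1) (hlam : 0 ≤ lam) :
    a₀ lam ⊓ geodesic a₀ a₁ t' lam ≤ geodesic a₀ a₁ t lam := by
  set A : Ideal R := ⨆ (mu : ℝ) (nu : ℝ) (_ : 0 ≤ nu ∧ lam ≤ mu ∧ (1 - t') * mu + t' * nu = lam),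
    a₀ mu ⊓ a₁ nu
  set B : Ideal R := ⨆ (mu : ℝ) (nu : ℝ) (_ : 0 ≤ mu ∧ mu < lam ∧ (1 - t') * mu + t' * nu = lam),
    a₀ mu ⊓ a₁ nu
  have hsplit : geodesic a₀ a₁ t' lam ≤ A ⊔ B := geodesic_le fun mu nu hmu hnu h ↦ by
    rcases le_or_gt lam mu with hc | hc
    · exact le_sup_of_le_left (le_iSup₂_of_le mu nu (le_iSup_of_le ⟨hnu, hc, h⟩ le_rfl))
    · exact le_sup_of_le_right (le_iSup₂_of_le mu nu (le_iSup_of_le ⟨hmu, hc, h⟩ le_rfl))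
  have hA₀ : A ≤ a₀ lam := iSup₂_le fun mu nu ↦ iSup_le fun ⟨_, hc, _⟩ ↦
    inf_le_left.trans (h₀.antitoneOn hlam (hlam.trans hc) hc)
  have hA : A ≤ geodesic a₀ a₁ t lam := iSup₂_le fun mu nu ↦ iSup_le fun ⟨hnu, hc, h⟩ ↦
    inf_le_geodesic h₀ h₁ ht (htt'.le.trans ht') (hlam.trans hc) hnu hlam
      (by nlinarith [mul_nonneg (sub_nonneg.2 htt'.le) (sub_nonneg.2 hc)])
  have hB : B ≤ a₁ lam := iSup₂_le fun mu nu ↦ iSup_le fun ⟨_, hc, h⟩ ↦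
    have hν : lam ≤ nu := by nlinarith [mul_pos (ht.trans_lt htt') (sub_pos.2 hc)]
    inf_le_right.trans (h₁.antitoneOn hlam (hlam.trans hν) hν)
  calc a₀ lam ⊓ geodesic a₀ a₁ t' lam
      ≤ A ⊔ B ⊓ a₀ lam := by
        rw [← sup_inf_assoc_of_le B hA₀, inf_comm]
        exact inf_le_inf_right _ hsplit
    _ ≤ geodesic a₀ a₁ t lam := sup_le hA <| (inf_le_inf_right _ hB).trans <| by
        rw [inf_comm]
        exact inf_le_geodesic h₀ h₁ ht (htt'.le.trans ht') hlam hlam hlam (le_of_eq (by ring))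

theorem inf_geodesic_sup_inf_geodesic_eq (h₀ : IsMFiltration R a₀) (h₁ : IsMFiltration R a₁)
    {t t' lam : ℝ} (ht : 0 ≤ t) (htt' : t ≤ t') (ht' : t' ≤ 1) (hlam : 0 ≤ lam) :
    (a₀ lam ⊓ geodesic a₀ a₁ t lam) ⊔ (geodesic a₀ a₁ t lam ⊓ geodesic a₀ a₁ t' lam) =
      geodesic a₀ a₁ t lam := by
  refine le_antisymm (sup_le inf_le_right inf_le_left) (geodesic_le fun mu nu hmu hnu h ↦ ?_)
  have hg : a₀ mu ⊓ a₁ nu ≤ geodesic a₀ a₁ t lam := le_geodesic hmu hnu h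
  rcases le_or_gt lam mu with hc | hc
  · exact le_sup_of_le_left (le_inf (inf_le_left.trans (h₀.antitoneOn hlam hmu hc)) hg)
  · -- for `μ ≤ ν`, raising `t` to `t'` can only increase `(1 - t) μ + t ν`
    have hν : mu ≤ nu := by nlinarith
    refine le_sup_of_le_right (le_inf hg (inf_le_geodesic h₀ h₁ (ht.trans htt') ht' hmu hnu
      hlam ?_))
    nlinarith [mul_nonneg (sub_nonneg.2 htt') (sub_nonneg.2 hν)]

theorem colengthR_inf_geodesic_add_colengthR_geodesic [IsNoetherianRing R]
    (h₀ : IsMFiltration R a₀) (h₁ : IsMFiltration R a₁)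
    {t t' lam : ℝ} (ht : 0 ≤ t) (htt' : t < t') (ht' : t' ≤ 1) (hlam : 0 < lam) :
    colengthR R (geodesic a₀ a₁ 0 lam ⊓ geodesic a₀ a₁ t' lam) +
        colengthR R (geodesic a₀ a₁ t lam) =
      colengthR R (geodesic a₀ a₁ 0 lam ⊓ geodesic a₀ a₁ t lam) +
        colengthR R (geodesic a₀ a₁ t lam ⊓ geodesic a₀ a₁ t' lam) := by
  rw [geodesic_zero h₁.zero hlam.le]
  have hinf : (a₀ lam ⊓ geodesic a₀ a₁ t lam) ⊓ (geodesic a₀ a₁ t lam ⊓ geodesic a₀ a₁ t' lam) =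
      a₀ lam ⊓ geodesic a₀ a₁ t' lam := by
    refine le_antisymm (le_inf (inf_le_left.trans inf_le_left) (inf_le_right.trans inf_le_right))
      (le_inf (le_inf inf_le_left ?_) (le_inf ?_ inf_le_right)) <;>
    exact inf_geodesic_le_geodesic h₀ h₁ ht htt' ht' hlam.le
  have hfin : Module.length R (R ⧸ a₀ lam ⊓ geodesic a₀ a₁ t' lam) ≠ ⊤ :=
    ne_top_of_le_ne_top ((h₀.primary lam hlam).inf (h₁.primary lam hlam)).length_quotient_ne_top
      (Submodule.length_quotient_antitone
        (le_inf inf_le_left (inf_le_geodesic h₀ h₁ (ht.trans htt'.le) ht' hlam.le hlam.le hlam.le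
          (le_of_eq (by ring)))))
  have key := colengthR_inf_add_colengthR_sup (hinf ▸ hfin)
  rw [hinf, inf_geodesic_sup_inf_geodesic_eq h₀ h₁ ht htt'.le ht' hlam.le] at key
  linarith

end Geodesic

theorem geodesic_distance_minimizing_general (n : ℕ)
    (a₀ a₁ : ℝ → Ideal R)
    (h₀ : IsMFiltration R a₀) (h₁ : IsMFiltration R a₁)
    (t t' : ℝ) (ht : 0 ≤ t) (htt' : t < t') (ht' : t' ≤ 1)
    (e0 et et' e0t ett' e0t' : ℝ)
    (het : Filter.Tendsto (fun m : ℕ =>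
      (n.factorial : ℝ) * colengthR R (geodesic a₀ a₁ t m) / (m : ℝ) ^ n)
      Filter.atTop (nhds et))
    (he0t : Filter.Tendsto (fun m : ℕ =>
      (n.factorial : ℝ) * colengthR R (geodesic a₀ a₁ 0 m ⊓ geodesic a₀ a₁ t m) / (m : ℝ) ^ n)
      Filter.atTop (nhds e0t))
    (hett' : Filter.Tendsto (fun m : ℕ =>
      (n.factorial : ℝ) * colengthR R (geodesic a₀ a₁ t m ⊓ geodesic a₀ a₁ t' m) / (m : ℝ) ^ n)
      Filter.atTop (nhds ett'))
    (he0t' : Filter.Tendsto (fun m : ℕ =>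
      (n.factorial : ℝ) * colengthR R (geodesic a₀ a₁ 0 m ⊓ geodesic a₀ a₁ t' m) / (m : ℝ) ^ n)
      Filter.atTop (nhds e0t')) :
    2 * e0t' - e0 - et' = (2 * e0t - e0 - et) + (2 * ett' - et - et') := by
  have hlim : e0t' + et = e0t + ett' := by
    refine tendsto_nhds_unique ((he0t'.add het).congr' ?_) (he0t.add hett')
    filter_upwards [Filter.eventually_gt_atTop 0] with m hm
    rw [← add_div, ← add_div, ← mul_add, ← mul_add,
      colengthR_inf_geodesic_add_colengthR_geodesic h₀ h₁ ht htt' ht' (Nat.cast_pos.2 hm)]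
  linarith

/-- The geodesic between two `m`-filtrations is distance-minimizing for `d₁`: if the
normalized colengths of `a_{•,0}`, `a_{•,t}`, `a_{•,t'}` and of their pairwise
intersections converge (to the multiplicities `e(·)`), then
`d₁(a_{•,0}, a_{•,t'}) = d₁(a_{•,0}, a_{•,t}) + d₁(a_{•,t}, a_{•,t'})`, where
`d₁(a_•, b_•) = 2e(a_• ∩ b_•) − e(a_•) − e(b_•)`. -/
theorem geodesic_distance_minimizing (n : ℕ) (hdim : ringKrullDim R = n)
    (a₀ a₁ : ℝ → Ideal R)
    (h₀ : IsMFiltration R a₀) (h₁ : IsMFiltration R a₁)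
    (t t' : ℝ) (ht : 0 ≤ t) (htt' : t < t') (ht' : t' ≤ 1)
    (e0 et et' e0t ett' e0t' : ℝ)
    (he0 : Filter.Tendsto (fun m : ℕ =>
      (n.factorial : ℝ) * colengthR R (geodesic a₀ a₁ 0 m) / (m : ℝ) ^ n)
      Filter.atTop (nhds e0))
    (het : Filter.Tendsto (fun m : ℕ =>
      (n.factorial : ℝ) * colengthR R (geodesic a₀ a₁ t m) / (m : ℝ) ^ n)
      Filter.atTop (nhds et))
    (het' : Filter.Tendsto (fun m : ℕ =>
      (n.factorial : ℝ) * colengthR R (geodesic a₀ a₁ t' m) / (m : ℝ) ^ n)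
      Filter.atTop (nhds et'))
    (he0t : Filter.Tendsto (fun m : ℕ =>
      (n.factorial : ℝ) * colengthR R (geodesic a₀ a₁ 0 m ⊓ geodesic a₀ a₁ t m) / (m : ℝ) ^ n)
      Filter.atTop (nhds e0t))
    (hett' : Filter.Tendsto (fun m : ℕ =>
      (n.factorial : ℝ) * colengthR R (geodesic a₀ a₁ t m ⊓ geodesic a₀ a₁ t' m) / (m : ℝ) ^ n)
      Filter.atTop (nhds ett'))
    (he0t' : Filter.Tendsto (fun m : ℕ =>
      (n.factorial : ℝ) * colengthR R (geodesic a₀ a₁ 0 m ⊓ geodesic a₀ a₁ t' m) / (m : ℝ) ^ n)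
      Filter.atTop (nhds e0t')) :
    2 * e0t' - e0 - et' = (2 * e0t - e0 - et) + (2 * ett' - et - et') :=
  geodesic_distance_minimizing_general n a₀ a₁ h₀ h₁ t t' ht htt' ht' e0 et et' e0t ett' e0t' het
    he0t hett' he0t'
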